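/- arXiv:2303.10997 — 2 statements merged into one kernel-verified Lean document; each statement's English description precedes it below -/
import Mathlib

section
/- Let I be a nonempty open real interval, let f : I → ℝ be a twice differentiable function on I with nonvanishing first derivative, and let p = (p₁,p₂) : I → ℝ₊² be differentiable on I. Then the second-order mixed partial derivative ∂₁∂₂A_{f,p} exists at every diagonal point (x,x) with x ∈ I, and ∂₁∂₂A_{f,p}(x,x) = −(p₁p₂/p₀²)(x)·((p₁p₂)'/(p₁p₂) + f''/f')(x), where p₀ := p₁ + p₂. -/
/-!
Write `A(t, s) = f⁻¹ (M(t, s))` with `M` the weighted mean of `f t` and `f s`. By Darboux's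
theorem `f'` has constant sign, so `f` is injective on `I` and the inverse function theorem gives
`∂₂A(t, x) = ∂₂M(t, x) / f'(A(t, x))` for all `t` near `x`. Differentiating this quotient in `t`
at `t = x`, where `A(x, x) = x` and `∂₁A(x, x) = p₁(x) / p₀(x)`, yields the formula.
-/

open Set

/-- The 2-variable generalized Bajraktarević mean
`A_{f,p}(x,y) = f⁻¹((p₁(x)f(x)+p₂(y)f(y))/(p₁(x)+p₂(y)))`,
where the inverse of `f` is taken on the interval `I`. -/
noncomputable def bajMean (I : Set ℝ) (f p₁ p₂ : ℝ → ℝ) (x y : ℝ) : ℝ :=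
  Function.invFunOn f I ((p₁ x * f x + p₂ y * f y) / (p₁ x + p₂ y))

open Filter Function
open scoped Topology

theorem HasStrictDerivAt.hasStrictDerivAt_invFunOn {𝕜 : Type*} [NontriviallyNormedField 𝕜]
    [CompleteSpace 𝕜] {I : Set 𝕜} (hI : IsOpen I) {f : 𝕜 → 𝕜} (hinj : InjOn f I) {f' z : 𝕜}
    (hz : z ∈ I) (hf : HasStrictDerivAt f f' z) (hf' : f' ≠ 0) :
    HasStrictDerivAt (invFunOn f I) f'⁻¹ (f z) :=
  hf.to_local_left_inverse hf' <|
    eventually_of_mem (hI.mem_nhds hz) fun _ hy => hinj.leftInvOn_invFunOn hy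

theorem hasDerivAt_invFunOn_comp {I : Set ℝ} (hI : IsOpen I) {f : ℝ → ℝ} (hinj : InjOn f I)
    (hf : ∀ z ∈ I, HasStrictDerivAt f (deriv f z) z) (hf' : ∀ z ∈ I, deriv f z ≠ 0)
    {u : ℝ → ℝ} {u' x : ℝ} (hu : HasDerivAt u u' x) (hux : u x ∈ f '' I) :
    HasDerivAt (fun t => invFunOn f I (u t)) (u' / deriv f (invFunOn f I (u x))) x := by
  obtain ⟨z, hz, hzu⟩ := hux
  rw [← hzu, hinj.leftInvOn_invFunOn hz, div_eq_inv_mul]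
  exact ((hf z hz).hasStrictDerivAt_invFunOn hI hinj hz (hf' z hz)).hasDerivAt.comp_of_eq x hu hzu

theorem Set.OrdConnected.injOn_of_deriv_ne_zero {I : Set ℝ} (hI : I.OrdConnected) (hIo : IsOpen I)
    {f : ℝ → ℝ} (hf : ∀ x ∈ I, DifferentiableAt ℝ f x) (hf' : ∀ x ∈ I, deriv f x ≠ 0) :
    InjOn f I := by
  have hcont : ContinuousOn f I := fun x hx => (hf x hx).continuousAt.continuousWithinAt
  rcases hasDerivWithinAt_forall_lt_or_forall_gt_of_forall_ne hI.convex
    (fun x hx => (hf x hx).hasDerivAt.hasDerivWithinAt) hf' with hneg | hpos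
  · exact (strictAntiOn_of_deriv_neg hI.convex hcont (by rwa [hIo.interior_eq])).injOn
  · exact (strictMonoOn_of_deriv_pos hI.convex hcont (by rwa [hIo.interior_eq])).injOn

theorem Set.OrdConnected.div_add_div_mem {s : Set ℝ} (hs : s.OrdConnected) {u v a b : ℝ}
    (hu : u ∈ s) (hv : v ∈ s) (ha : 0 ≤ a) (hb : 0 ≤ b) (hab : 0 < a + b) :
    (a * u + b * v) / (a + b) ∈ s := by
  convert convex_iff_div.mp hs.convex hu hv ha hb hab using 1
  simp only [smul_eq_mul]
  ring

section BajraktarevicMean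

variable {I : Set ℝ} {f p₁ p₂ : ℝ → ℝ} {t x : ℝ}

theorem bajMean_self (hinj : InjOn f I) (hx : x ∈ I) (hp : p₁ x + p₂ x ≠ 0) :
    bajMean I f p₁ p₂ x x = x := by
  rw [bajMean, ← add_mul, mul_div_cancel_left₀ _ hp, hinj.leftInvOn_invFunOn hx]

theorem hasDerivAt_bajMean_right (hI : IsOpen I) (hinj : InjOn f I)
    (hf : ∀ z ∈ I, HasStrictDerivAt f (deriv f z) z) (hf' : ∀ z ∈ I, deriv f z ≠ 0)
    (hx : x ∈ I) (hp : p₁ t + p₂ x ≠ 0) (hp₂ : DifferentiableAt ℝ p₂ x)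
    (hmem : (p₁ t * f t + p₂ x * f x) / (p₁ t + p₂ x) ∈ f '' I) :
    HasDerivAt (fun s => bajMean I f p₁ p₂ t s)
      ((p₂ x * deriv f x / (p₁ t + p₂ x) + deriv p₂ x * p₁ t * (f x - f t) / (p₁ t + p₂ x) ^ 2) /
        deriv f (bajMean I f p₁ p₂ t x)) x := by
  have hnum := ((hp₂.hasDerivAt.mul (hf x hx).hasDerivAt).const_add (p₁ t * f t))
  have hmean := hnum.div (hp₂.hasDerivAt.const_add (p₁ t)) hp
  refine (hasDerivAt_invFunOn_comp hI hinj hf hf' hmean hmem).congr_deriv ?_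
  congr 1
  simp only [Pi.mul_apply]
  field_simp
  ring

theorem hasDerivAt_bajMean_left_self (hI : IsOpen I) (hinj : InjOn f I)
    (hf : ∀ z ∈ I, HasStrictDerivAt f (deriv f z) z) (hf' : ∀ z ∈ I, deriv f z ≠ 0)
    (hx : x ∈ I) (hp : p₁ x + p₂ x ≠ 0) (hp₁ : DifferentiableAt ℝ p₁ x) :
    HasDerivAt (fun t => bajMean I f p₁ p₂ t x) (p₁ x / (p₁ x + p₂ x)) x := by
  have hnum := (hp₁.hasDerivAt.mul (hf x hx).hasDerivAt).add_const (p₂ x * f x)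
  have hmean := hnum.div (hp₁.hasDerivAt.add_const (p₂ x)) hp
  have hmem : (p₁ x * f x + p₂ x * f x) / (p₁ x + p₂ x) ∈ f '' I := by
    rw [← add_mul, mul_div_cancel_left₀ _ hp]
    exact mem_image_of_mem f hx
  refine (hasDerivAt_invFunOn_comp hI hinj hf hf' hmean hmem).congr_deriv ?_
  simp only [Pi.mul_apply, Pi.div_apply]
  rw [← add_mul, mul_div_cancel_left₀ _ hp, hinj.leftInvOn_invFunOn hx]
  field_simp [hf' x hx]
  ring

theorem hasDerivAt_bajMean_right_numerator (hp : p₁ x + p₂ x ≠ 0) (hp₁ : DifferentiableAt ℝ p₁ x)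
    (hf : DifferentiableAt ℝ f x) :
    HasDerivAt (fun t => p₂ x * deriv f x / (p₁ t + p₂ x) +
        deriv p₂ x * p₁ t * (f x - f t) / (p₁ t + p₂ x) ^ 2)
      (-(deriv f x * (deriv p₁ x * p₂ x + p₁ x * deriv p₂ x)) / (p₁ x + p₂ x) ^ 2) x := by
  have hden := hp₁.hasDerivAt.add_const (p₂ x)
  have hfirst := (hasDerivAt_const x (p₂ x * deriv f x)).div hden hp
  have hsecond := ((hp₁.hasDerivAt.const_mul (deriv p₂ x)).mul
    ((hasDerivAt_const x (f x)).sub hf.hasDerivAt)).div (hden.pow 2) (pow_ne_zero 2 hp)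
  refine (hfirst.add hsecond).congr_deriv ?_
  simp only [Pi.mul_apply, Pi.sub_apply, Pi.pow_apply, sub_self]
  field_simp
  ring

end BajraktarevicMean

theorem stmt6_general (I : Set ℝ) (hIopen : IsOpen I) (hIconn : I.OrdConnected)
    (f p₁ p₂ : ℝ → ℝ)
    (hf1 : ∀ x ∈ I, DifferentiableAt ℝ f x)
    (hf2 : ∀ x ∈ I, DifferentiableAt ℝ (deriv f) x)
    (hf' : ∀ x ∈ I, deriv f x ≠ 0)
    (hp : ∀ x ∈ I, 0 < p₁ x ∧ 0 < p₂ x)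
    (hp1d : ∀ x ∈ I, DifferentiableAt ℝ p₁ x)
    (hp2d : ∀ x ∈ I, DifferentiableAt ℝ p₂ x) :
    -- `∂₁∂₂ A_{f,p}` exists at every diagonal point `(x,x)` and has the stated value:
    -- the function `t ↦ ∂₂ A_{f,p}(t,x)` has, at `t = x`, the derivative
    -- `-(p₁p₂/p₀²)(x) ((p₁p₂)'/(p₁p₂) + f''/f')(x)`.
    ∀ x ∈ I, HasDerivAt
      (fun t => deriv (fun s => bajMean I f p₁ p₂ t s) x)
      (-(p₁ x * p₂ x / (p₁ x + p₂ x) ^ 2) *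
        (deriv (fun t => p₁ t * p₂ t) x / (p₁ x * p₂ x) +
          deriv (deriv f) x / deriv f x)) x := by
  intro x hx
  obtain ⟨hx₁, hx₂⟩ := hp x hx
  have hp₀ : p₁ x + p₂ x ≠ 0 := by positivity
  have hinj : InjOn f I := hIconn.injOn_of_deriv_ne_zero hIopen hf1 hf'
  have hstrict : ∀ z ∈ I, HasStrictDerivAt f (deriv f z) z := fun z hz =>
    hasStrictDerivAt_of_hasDerivAt_of_continuousAt
      (eventually_of_mem (hIopen.mem_nhds hz) fun y hy => (hf1 y hy).hasDerivAt)
      (hf2 z hz).continuousAt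
  have himage : (f '' I).OrdConnected :=
    (hIconn.isPreconnected.image f fun z hz => (hf1 z hz).continuousAt.continuousWithinAt).ordConnected
  set q : ℝ → ℝ := fun t =>
    p₂ x * deriv f x / (p₁ t + p₂ x) + deriv p₂ x * p₁ t * (f x - f t) / (p₁ t + p₂ x) ^ 2
  have hpartial : (fun t => deriv (fun s => bajMean I f p₁ p₂ t s) x) =ᶠ[𝓝 x]
      fun t => q t / deriv f (bajMean I f p₁ p₂ t x) := by
    filter_upwards [hIopen.mem_nhds hx] with t ht
    have hpos : 0 < p₁ t + p₂ x := add_pos (hp t ht).1 hx₂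
    exact (hasDerivAt_bajMean_right hIopen hinj hstrict hf' hx hpos.ne' (hp2d x hx)
      (himage.div_add_div_mem ⟨t, ht, rfl⟩ ⟨x, hx, rfl⟩ (hp t ht).1.le hx₂.le hpos)).deriv
  have hdenom : HasDerivAt (fun t => deriv f (bajMean I f p₁ p₂ t x))
      (deriv (deriv f) x * (p₁ x / (p₁ x + p₂ x))) x :=
    (hf2 x hx).hasDerivAt.comp_of_eq x
      (hasDerivAt_bajMean_left_self hIopen hinj hstrict hf' hx hp₀ (hp1d x hx))
      (bajMean_self hinj hx hp₀).symm
  have hq := hasDerivAt_bajMean_right_numerator hp₀ (hp1d x hx) (hf1 x hx)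
  refine ((hq.div hdenom ?_).congr_of_eventuallyEq hpartial).congr_deriv ?_
  · rw [bajMean_self hinj hx hp₀]
    exact hf' x hx
  rw [bajMean_self hinj hx hp₀, deriv_fun_mul (hp1d x hx) (hp2d x hx)]
  field_simp [hf' x hx]
  ring

theorem stmt6 (I : Set ℝ) (hIopen : IsOpen I) (hIne : I.Nonempty) (hIconn : I.OrdConnected)
    (f p₁ p₂ : ℝ → ℝ)
    (hf1 : ∀ x ∈ I, DifferentiableAt ℝ f x)
    (hf2 : ∀ x ∈ I, DifferentiableAt ℝ (deriv f) x)
    (hf' : ∀ x ∈ I, deriv f x ≠ 0)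
    (hp : ∀ x ∈ I, 0 < p₁ x ∧ 0 < p₂ x)
    (hp1d : ∀ x ∈ I, DifferentiableAt ℝ p₁ x)
    (hp2d : ∀ x ∈ I, DifferentiableAt ℝ p₂ x) :
    -- `∂₁∂₂ A_{f,p}` exists at every diagonal point `(x,x)` and has the stated value:
    -- the function `t ↦ ∂₂ A_{f,p}(t,x)` has, at `t = x`, the derivative
    -- `-(p₁p₂/p₀²)(x) ((p₁p₂)'/(p₁p₂) + f''/f')(x)`.
    ∀ x ∈ I, HasDerivAt
      (fun t => deriv (fun s => bajMean I f p₁ p₂ t s) x)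
      (-(p₁ x * p₂ x / (p₁ x + p₂ x) ^ 2) *
        (deriv (fun t => p₁ t * p₂ t) x / (p₁ x * p₂ x) +
          deriv (deriv f) x / deriv f x)) x :=
  stmt6_general I hIopen hIconn f p₁ p₂ hf1 hf2 hf' hp hp1d hp2d
end

section
/- Let I be a nonempty open real interval, let f,g : I → ℝ be four times continuously differentiable strictly monotone functions with nonvanishing first derivatives, let p = (p₁,p₂) : I → ℝ₊² be twice continuously differentiable, and let q = (q₁,q₂) : I → ℝ₊². If there exists an open set U ⊆ I² containing the diagonal diag(I²) = {(x,x) : x ∈ I} such that A_{f,p}(x,y) + A_{g,q}(x,y) = x + y holds for all (x,y) ∈ U, then q₁ and q₂ are twice continuously differentiable on I, and the equalities ∂₁A_{f,p} + ∂₁A_{g,q} = 1, ∂₁∂₂A_{f,p} + ∂₁∂₂A_{g,q} = 0, ∂₁²∂₂A_{f,p} + ∂₁²∂₂A_{g,q} = 0, and ∂₁²∂₂²A_{f,p} + ∂₁²∂₂²A_{g,q} = 0 hold at every point of diag(I²). -/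
open Set

/-- Partial derivative with respect to the first variable. -/
noncomputable def pd1 (M : ℝ → ℝ → ℝ) (x y : ℝ) : ℝ := deriv (fun t => M t y) x

/-- Partial derivative with respect to the second variable. -/
noncomputable def pd2 (M : ℝ → ℝ → ℝ) (x y : ℝ) : ℝ := deriv (fun t => M x t) y

/-!
On `U` the hypothesis reads `A_{g,q} = x + y - A_{f,p}`, and `A_{f,p}` is `C²` there by the inverse
function theorem. Hence the first partial derivatives of the two means add up to `1` on `U`; every
further derivative of the sum vanishes on `U` without any differentiability of the first partials,
because `deriv (fun t => c - h t) = -deriv h` holds unconditionally.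

For the weights, put `M = A_{g,q}(x, y)`. The definition of the mean gives
`q₁(x) (g x - g M) = q₂(y) (g M - g y)`, and `g x ≠ g M` when `x ≠ y`. Fixing `y₀ ≠ x₀` with
`(x₀, y₀) ∈ U`, this expresses `q₁` near `x₀` as a `C²` function of `x`. The symmetry
`A_{g,(q₁,q₂)}(x, y) = A_{g,(q₂,q₁)}(y, x)` then gives the claim for `q₂`.
-/

open Filter Topology

lemma IsOpen.eventually_prodMk_left_mem {α β : Type*} [TopologicalSpace α] [TopologicalSpace β]
    {U : Set (α × β)} (hU : IsOpen U) {x : α} {y : β} (h : (x, y) ∈ U) :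
    ∀ᶠ t in 𝓝 x, (t, y) ∈ U :=
  (continuous_id.prodMk continuous_const).continuousAt.preimage_mem_nhds (hU.mem_nhds h)

lemma weightedMean_mem_uIcc {w₁ w₂ : ℝ} (hw₁ : 0 < w₁) (hw₂ : 0 < w₂) (a b : ℝ) :
    (w₁ * a + w₂ * b) / (w₁ + w₂) ∈ uIcc a b := by
  rw [← segment_eq_uIcc, mem_segment_iff_div]
  refine ⟨w₁, w₂, hw₁.le, hw₂.le, by positivity, ?_⟩
  simp only [smul_eq_mul]
  ring

lemma weightedMean_ne_left {w₁ w₂ a b : ℝ} (hw₁ : 0 < w₁) (hw₂ : 0 < w₂) (hab : a ≠ b) :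
    a - (w₁ * a + w₂ * b) / (w₁ + w₂) ≠ 0 := by
  have : a - (w₁ * a + w₂ * b) / (w₁ + w₂) = w₂ * (a - b) / (w₁ + w₂) := by
    field_simp
    ring
  rw [this]
  exact div_ne_zero (mul_ne_zero hw₂.ne' (sub_ne_zero.2 hab)) (by positivity)

lemma weight_eq_of_weightedMean {w₁ w₂ a b : ℝ} (hw₁ : 0 < w₁) (hw₂ : 0 < w₂) (hab : a ≠ b) :
    w₁ = w₂ * ((w₁ * a + w₂ * b) / (w₁ + w₂) - b) / (a - (w₁ * a + w₂ * b) / (w₁ + w₂)) := by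
  rw [eq_div_iff (weightedMean_ne_left hw₁ hw₂ hab)]
  field_simp
  ring

lemma weightedMean_mem_image {I : Set ℝ} (hI : I.OrdConnected) {f : ℝ → ℝ}
    (hf : ContinuousOn f I) {x y w₁ w₂ : ℝ} (hx : x ∈ I) (hy : y ∈ I)
    (hw₁ : 0 < w₁) (hw₂ : 0 < w₂) :
    (w₁ * f x + w₂ * f y) / (w₁ + w₂) ∈ f '' I :=
  (hI.isPreconnected.image f hf).ordConnected.uIcc_subset (mem_image_of_mem f hx)
    (mem_image_of_mem f hy) (weightedMean_mem_uIcc hw₁ hw₂ _ _)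

lemma contDiffAt_invFunOn {I : Set ℝ} (hI : IsOpen I) {f : ℝ → ℝ} {n : WithTop ℕ∞}
    (hn : n ≠ 0) (hf : ContDiffOn ℝ n f I) (hinj : InjOn f I)
    (hf' : ∀ x ∈ I, deriv f x ≠ 0) {b : ℝ} (hb : b ∈ f '' I) :
    ContDiffAt ℝ n (Function.invFunOn f I) b := by
  obtain ⟨a, ha, rfl⟩ := hb
  have hfa : ContDiffAt ℝ n f a := hf.contDiffAt (hI.mem_nhds ha)
  have hfd := ((hfa.differentiableAt hn).hasDerivAt).hasFDerivAt_equiv (hf' a ha)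
  set S := hfa.hasStrictFDerivAt' hfd hn
  have hmem : ∀ᶠ y in 𝓝 (f a), S.localInverse f _ a y ∈ I :=
    S.localInverse_continuousAt.eventually_mem
      (by rw [S.localInverse_apply_image]; exact hI.mem_nhds ha)
  refine (hfa.to_localInverse hfd hn).congr_of_eventuallyEq ?_
  filter_upwards [S.eventually_right_inverse, hmem] with y hy hyI
  conv_lhs => rw [← hy]
  exact hinj (Function.invFunOn_apply_mem hyI) hyI (Function.invFunOn_apply_eq hyI)

section bajMean

variable {I : Set ℝ} {f p₁ p₂ : ℝ → ℝ}

lemma bajMean_comm (x y : ℝ) : bajMean I f p₂ p₁ y x = bajMean I f p₁ p₂ x y := by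
  rw [bajMean, bajMean, add_comm (p₂ y * f y), add_comm (p₂ y)]

lemma bajMean_mem (hI : I.OrdConnected) (hf : ContinuousOn f I)
    (hp : ∀ x ∈ I, 0 < p₁ x ∧ 0 < p₂ x) {x y : ℝ} (hx : x ∈ I) (hy : y ∈ I) :
    bajMean I f p₁ p₂ x y ∈ I :=
  Function.invFunOn_mem (weightedMean_mem_image hI hf hx hy (hp x hx).1 (hp y hy).2)

lemma apply_bajMean (hI : I.OrdConnected) (hf : ContinuousOn f I)
    (hp : ∀ x ∈ I, 0 < p₁ x ∧ 0 < p₂ x) {x y : ℝ} (hx : x ∈ I) (hy : y ∈ I) :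
    f (bajMean I f p₁ p₂ x y) = (p₁ x * f x + p₂ y * f y) / (p₁ x + p₂ y) :=
  Function.invFunOn_eq (weightedMean_mem_image hI hf hx hy (hp x hx).1 (hp y hy).2)

lemma weight_left_eq_div (hI : I.OrdConnected) (hf : ContinuousOn f I) (hinj : InjOn f I)
    (hp : ∀ x ∈ I, 0 < p₁ x ∧ 0 < p₂ x) {x y : ℝ} (hx : x ∈ I) (hy : y ∈ I) (hxy : x ≠ y) :
    f x - f (bajMean I f p₁ p₂ x y) ≠ 0 ∧
      p₁ x = p₂ y * (f (bajMean I f p₁ p₂ x y) - f y) / (f x - f (bajMean I f p₁ p₂ x y)) := by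
  have hfxy : f x ≠ f y := fun h => hxy (hinj hx hy h)
  rw [apply_bajMean hI hf hp hx hy]
  exact ⟨weightedMean_ne_left (hp x hx).1 (hp y hy).2 hfxy,
    weight_eq_of_weightedMean (hp x hx).1 (hp y hy).2 hfxy⟩

lemma contDiffAt_bajMean (hI : IsOpen I) (hIc : I.OrdConnected) {n : WithTop ℕ∞} (hn : n ≠ 0)
    (hf : ContDiffOn ℝ n f I) (hinj : InjOn f I) (hf' : ∀ x ∈ I, deriv f x ≠ 0)
    (hp₁ : ContDiffOn ℝ n p₁ I) (hp₂ : ContDiffOn ℝ n p₂ I) (hp : ∀ x ∈ I, 0 < p₁ x ∧ 0 < p₂ x)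
    {x y : ℝ} (hx : x ∈ I) (hy : y ∈ I) :
    ContDiffAt ℝ n (fun u : ℝ × ℝ => bajMean I f p₁ p₂ u.1 u.2) (x, y) := by
  have hfst {φ : ℝ → ℝ} (hφ : ContDiffOn ℝ n φ I) :
      ContDiffAt ℝ n (fun u : ℝ × ℝ => φ u.1) (x, y) :=
    (hφ.contDiffAt (hI.mem_nhds hx)).comp (x, y) contDiffAt_fst
  have hsnd {φ : ℝ → ℝ} (hφ : ContDiffOn ℝ n φ I) :
      ContDiffAt ℝ n (fun u : ℝ × ℝ => φ u.2) (x, y) :=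
    (hφ.contDiffAt (hI.mem_nhds hy)).comp (x, y) contDiffAt_snd
  have hmean : ContDiffAt ℝ n
      (fun u : ℝ × ℝ => (p₁ u.1 * f u.1 + p₂ u.2 * f u.2) / (p₁ u.1 + p₂ u.2)) (x, y) :=
    (((hfst hp₁).mul (hfst hf)).add ((hsnd hp₂).mul (hsnd hf))).div ((hfst hp₁).add (hsnd hp₂))
      (add_pos (hp x hx).1 (hp y hy).2).ne'
  exact (contDiffAt_invFunOn hI hn hf hinj hf'
    (weightedMean_mem_image hIc hf.continuousOn hx hy (hp x hx).1 (hp y hy).2)).comp (x, y) hmean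

end bajMean

lemma contDiffOn_weight_left {I : Set ℝ} (hI : IsOpen I) (hIc : I.OrdConnected) {n : WithTop ℕ∞}
    {g q₁ q₂ : ℝ → ℝ} (hg : ContDiffOn ℝ n g I) (hinj : InjOn g I)
    (hq : ∀ x ∈ I, 0 < q₁ x ∧ 0 < q₂ x) {U : Set (ℝ × ℝ)} (hU : IsOpen U) (hUI : U ⊆ I ×ˢ I)
    (hdiag : ∀ x ∈ I, (x, x) ∈ U)
    (hG : ContDiffOn ℝ n (fun u : ℝ × ℝ => bajMean I g q₁ q₂ u.1 u.2) U) :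
    ContDiffOn ℝ n q₁ I := by
  intro x₀ hx₀
  refine ContDiffAt.contDiffWithinAt ?_
  have hright : ∀ᶠ y in 𝓝 x₀, (x₀, y) ∈ U :=
    (continuous_const.prodMk continuous_id).continuousAt.preimage_mem_nhds
      (hU.mem_nhds (hdiag x₀ hx₀))
  obtain ⟨y₀, hy₀U, hy₀x₀⟩ :=
    ((hright.filter_mono nhdsWithin_le_nhds).and (self_mem_nhdsWithin (s := {x₀}ᶜ))).exists
  have hy₀ : y₀ ∈ I := (hUI hy₀U).2
  have hx₀y₀ : x₀ ≠ y₀ := Ne.symm hy₀x₀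
  have hGc : ContDiffAt ℝ n (fun x => bajMean I g q₁ q₂ x y₀) x₀ :=
    ((hG.contDiffAt (hU.mem_nhds hy₀U)).comp x₀ (contDiffAt_id.prodMk contDiffAt_const) :)
  have hgG : ContDiffAt ℝ n (fun x => g (bajMean I g q₁ q₂ x y₀)) x₀ :=
    (hg.contDiffAt (hI.mem_nhds (bajMean_mem hIc hg.continuousOn hq hx₀ hy₀))).comp x₀ hGc
  have hφ : ContDiffAt ℝ n (fun x => q₂ y₀ * (g (bajMean I g q₁ q₂ x y₀) - g y₀) /
      (g x - g (bajMean I g q₁ q₂ x y₀))) x₀ :=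
    (contDiffAt_const.mul (hgG.sub contDiffAt_const)).div
      ((hg.contDiffAt (hI.mem_nhds hx₀)).sub hgG)
      (weight_left_eq_div hIc hg.continuousOn hinj hq hx₀ hy₀ hx₀y₀).1
  refine hφ.congr_of_eventuallyEq ?_
  filter_upwards [hU.eventually_prodMk_left_mem hy₀U, eventually_ne_nhds hx₀y₀] with x hxU hxy₀
  exact (weight_left_eq_div hIc hg.continuousOn hinj hq (hUI hxU).1 hy₀ hxy₀).2

lemma contDiffOn_weight_right {I : Set ℝ} (hI : IsOpen I) (hIc : I.OrdConnected)
    {n : WithTop ℕ∞} {g q₁ q₂ : ℝ → ℝ} (hg : ContDiffOn ℝ n g I) (hinj : InjOn g I)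
    (hq : ∀ x ∈ I, 0 < q₁ x ∧ 0 < q₂ x) {U : Set (ℝ × ℝ)} (hU : IsOpen U) (hUI : U ⊆ I ×ˢ I)
    (hdiag : ∀ x ∈ I, (x, x) ∈ U)
    (hG : ContDiffOn ℝ n (fun u : ℝ × ℝ => bajMean I g q₁ q₂ u.1 u.2) U) :
    ContDiffOn ℝ n q₂ I := by
  refine contDiffOn_weight_left hI hIc hg hinj (q₂ := q₁) (fun x hx => (hq x hx).symm)
    (hU.preimage continuous_swap) (fun u hu => (hUI hu).symm) hdiag ?_
  simp only [bajMean_comm]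
  exact hG.comp (contDiff_snd.prodMk contDiff_fst).contDiffOn fun u hu => hu

section partialDerivatives

variable {M N : ℝ → ℝ → ℝ} {U : Set (ℝ × ℝ)}

lemma pd1_add_pd1_eq_zero (hU : IsOpen U) {c : ℝ} (h : ∀ u ∈ U, M u.1 u.2 + N u.1 u.2 = c) :
    ∀ u ∈ U, pd1 M u.1 u.2 + pd1 N u.1 u.2 = 0 := by
  rintro ⟨x, y⟩ hxy
  have hN : (fun t => N t y) =ᶠ[𝓝 x] fun t => c - M t y := by
    filter_upwards [hU.eventually_prodMk_left_mem hxy] with t ht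
    linarith [h (t, y) ht]
  simp only [pd1, hN.deriv_eq, deriv_const_sub, add_neg_cancel]

lemma pd2_add_pd2_eq_zero (hU : IsOpen U) {c : ℝ} (h : ∀ u ∈ U, M u.1 u.2 + N u.1 u.2 = c) :
    ∀ u ∈ U, pd2 M u.1 u.2 + pd2 N u.1 u.2 = 0 := fun u hu =>
  pd1_add_pd1_eq_zero (M := flip M) (N := flip N) (hU.preimage continuous_swap)
    (fun v hv => h v.swap hv) u.swap hu

lemma pd1_add_pd1_eq_one (hU : IsOpen U) (h : ∀ u ∈ U, M u.1 u.2 + N u.1 u.2 = u.1 + u.2)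
    (hM : ∀ u ∈ U, DifferentiableAt ℝ (fun v : ℝ × ℝ => M v.1 v.2) u) :
    ∀ u ∈ U, pd1 M u.1 u.2 + pd1 N u.1 u.2 = 1 := by
  rintro ⟨x, y⟩ hxy
  have hN : (fun t => N t y) =ᶠ[𝓝 x] fun t => t + y - M t y := by
    filter_upwards [hU.eventually_prodMk_left_mem hxy] with t ht
    linarith [h (t, y) ht]
  have hslice : DifferentiableAt ℝ (fun t : ℝ => (t, y)) x :=
    differentiableAt_id.prodMk (differentiableAt_const y)
  have hMx : DifferentiableAt ℝ (fun t => M t y) x := ((hM _ hxy).comp x hslice :)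
  have hNx : HasDerivAt (fun t => t + y - M t y) (1 - pd1 M x y) x :=
    ((hasDerivAt_id' x).add_const y).sub hMx.hasDerivAt
  simp only [pd1] at hNx ⊢
  rw [hN.deriv_eq, hNx.deriv]
  ring

lemma pd2_add_pd2_eq_one (hU : IsOpen U) (h : ∀ u ∈ U, M u.1 u.2 + N u.1 u.2 = u.1 + u.2)
    (hM : ∀ u ∈ U, DifferentiableAt ℝ (fun v : ℝ × ℝ => M v.1 v.2) u) :
    ∀ u ∈ U, pd2 M u.1 u.2 + pd2 N u.1 u.2 = 1 := fun u hu =>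
  pd1_add_pd1_eq_one (M := flip M) (N := flip N) (hU.preimage continuous_swap)
    (fun v hv => (h v.swap hv).trans (add_comm _ _))
    (fun v hv => ((hM v.swap hv).comp v (differentiableAt_snd.prodMk differentiableAt_fst) :))
    u.swap hu

end partialDerivatives

theorem stmt14_general (I : Set ℝ) (hIopen : IsOpen I) (hIconn : I.OrdConnected)
    (f g p₁ p₂ q₁ q₂ : ℝ → ℝ)
    (hf : ContDiffOn ℝ 4 f I) (hg : ContDiffOn ℝ 4 g I)
    (hfm : StrictMonoOn f I ∨ StrictAntiOn f I)
    (hgm : StrictMonoOn g I ∨ StrictAntiOn g I)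
    (hf' : ∀ x ∈ I, deriv f x ≠ 0)
    (hp1 : ContDiffOn ℝ 2 p₁ I) (hp2 : ContDiffOn ℝ 2 p₂ I)
    (hp : ∀ x ∈ I, 0 < p₁ x ∧ 0 < p₂ x)
    (hq : ∀ x ∈ I, 0 < q₁ x ∧ 0 < q₂ x)
    (U : Set (ℝ × ℝ)) (hUopen : IsOpen U) (hUsub : U ⊆ I ×ˢ I)
    (hUdiag : ∀ x ∈ I, (x, x) ∈ U)
    (hinv : ∀ u ∈ U,
      bajMean I f p₁ p₂ u.1 u.2 + bajMean I g q₁ q₂ u.1 u.2 = u.1 + u.2) :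
    ContDiffOn ℝ 2 q₁ I ∧ ContDiffOn ℝ 2 q₂ I ∧
    (∀ x ∈ I, pd1 (bajMean I f p₁ p₂) x x + pd1 (bajMean I g q₁ q₂) x x = 1) ∧
    (∀ x ∈ I, pd1 (pd2 (bajMean I f p₁ p₂)) x x +
      pd1 (pd2 (bajMean I g q₁ q₂)) x x = 0) ∧
    (∀ x ∈ I, pd1 (pd1 (pd2 (bajMean I f p₁ p₂))) x x +
      pd1 (pd1 (pd2 (bajMean I g q₁ q₂))) x x = 0) ∧
    (∀ x ∈ I, pd1 (pd1 (pd2 (pd2 (bajMean I f p₁ p₂)))) x x +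
      pd1 (pd1 (pd2 (pd2 (bajMean I g q₁ q₂)))) x x = 0) := by
  have hfinj : InjOn f I := hfm.elim StrictMonoOn.injOn StrictAntiOn.injOn
  have hginj : InjOn g I := hgm.elim StrictMonoOn.injOn StrictAntiOn.injOn
  have hF : ∀ u ∈ U, ContDiffAt ℝ 2 (fun v : ℝ × ℝ => bajMean I f p₁ p₂ v.1 v.2) u :=
    fun u hu => contDiffAt_bajMean hIopen hIconn two_ne_zero (hf.of_le (by norm_num)) hfinj hf'
      hp1 hp2 hp (hUsub hu).1 (hUsub hu).2
  have hG : ContDiffOn ℝ 2 (fun u : ℝ × ℝ => bajMean I g q₁ q₂ u.1 u.2) U :=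
    ((contDiff_fst.add contDiff_snd).contDiffOn.sub fun u hu => (hF u hu).contDiffWithinAt).congr
      fun u hu => by simp only [← hinv u hu]; ring
  have hFdiff : ∀ u ∈ U, DifferentiableAt ℝ (fun v : ℝ × ℝ => bajMean I f p₁ p₂ v.1 v.2) u :=
    fun u hu => (hF u hu).differentiableAt two_ne_zero
  have hg2 : ContDiffOn ℝ 2 g I := hg.of_le (by norm_num)
  have hd1 := pd1_add_pd1_eq_one hUopen hinv hFdiff
  have hd2 := pd2_add_pd2_eq_one hUopen hinv hFdiff
  have hd12 := pd1_add_pd1_eq_zero hUopen hd2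
  have hd22 := pd2_add_pd2_eq_zero hUopen hd2
  have hd122 := pd1_add_pd1_eq_zero hUopen hd22
  refine ⟨contDiffOn_weight_left hIopen hIconn hg2 hginj hq hUopen hUsub hUdiag hG,
    contDiffOn_weight_right hIopen hIconn hg2 hginj hq hUopen hUsub hUdiag hG,
    fun x hx => hd1 _ (hUdiag x hx), fun x hx => hd12 _ (hUdiag x hx),
    fun x hx => pd1_add_pd1_eq_zero hUopen hd12 _ (hUdiag x hx),
    fun x hx => pd1_add_pd1_eq_zero hUopen hd122 _ (hUdiag x hx)⟩

theorem stmt14 (I : Set ℝ) (hIopen : IsOpen I) (hIne : I.Nonempty) (hIconn : I.OrdConnected)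
    (f g p₁ p₂ q₁ q₂ : ℝ → ℝ)
    (hf : ContDiffOn ℝ 4 f I) (hg : ContDiffOn ℝ 4 g I)
    (hfm : StrictMonoOn f I ∨ StrictAntiOn f I)
    (hgm : StrictMonoOn g I ∨ StrictAntiOn g I)
    (hf' : ∀ x ∈ I, deriv f x ≠ 0) (hg' : ∀ x ∈ I, deriv g x ≠ 0)
    (hp1 : ContDiffOn ℝ 2 p₁ I) (hp2 : ContDiffOn ℝ 2 p₂ I)
    (hp : ∀ x ∈ I, 0 < p₁ x ∧ 0 < p₂ x)
    (hq : ∀ x ∈ I, 0 < q₁ x ∧ 0 < q₂ x)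
    (U : Set (ℝ × ℝ)) (hUopen : IsOpen U) (hUsub : U ⊆ I ×ˢ I)
    (hUdiag : ∀ x ∈ I, (x, x) ∈ U)
    (hinv : ∀ u ∈ U,
      bajMean I f p₁ p₂ u.1 u.2 + bajMean I g q₁ q₂ u.1 u.2 = u.1 + u.2) :
    ContDiffOn ℝ 2 q₁ I ∧ ContDiffOn ℝ 2 q₂ I ∧
    (∀ x ∈ I, pd1 (bajMean I f p₁ p₂) x x + pd1 (bajMean I g q₁ q₂) x x = 1) ∧
    (∀ x ∈ I, pd1 (pd2 (bajMean I f p₁ p₂)) x x +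
      pd1 (pd2 (bajMean I g q₁ q₂)) x x = 0) ∧
    (∀ x ∈ I, pd1 (pd1 (pd2 (bajMean I f p₁ p₂))) x x +
      pd1 (pd1 (pd2 (bajMean I g q₁ q₂))) x x = 0) ∧
    (∀ x ∈ I, pd1 (pd1 (pd2 (pd2 (bajMean I f p₁ p₂)))) x x +
      pd1 (pd1 (pd2 (pd2 (bajMean I g q₁ q₂)))) x x = 0) :=
  stmt14_general I hIopen hIconn f g p₁ p₂ q₁ q₂ hf hg hfm hgm hf' hp1 hp2 hp hq U hUopen hUsub
    hUdiag hinv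
end
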